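/- Let ρ ↦ L_0(ρ) := γ·(E_{02} ρ E_{20} − (1/2)(E_{22} ρ + ρ E_{22})) be the ℂ-linear endomorphism of the space of 3×3 complex matrices, where γ is a real number and E_{ij} denotes the matrix unit with a 1 in row i, column j (indices 0,1,2). Then for all t ∈ ℝ and all 3×3 complex matrices ρ, the matrix exp(t L_0)(ρ) has entries: (exp(t L_0)ρ)_{00} = ρ_{00} + (1 − e^{−γ t}) ρ_{22}, (exp(t L_0)ρ)_{22} = e^{−γ t} ρ_{22}, (exp(t L_0)ρ)_{02} = e^{−γ t/2} ρ_{02}, (exp(t L_0)ρ)_{20} = e^{−γ t/2} ρ_{20}, (exp(t L_0)ρ)_{12} = e^{−γ t/2} ρ_{12}, (exp(t L_0)ρ)_{21} = e^{−γ t/2} ρ_{21}, and (exp(t L_0)ρ)_{01} = ρ_{01}, (exp(t L_0)ρ)_{10} = ρ_{10}, (exp(t L_0)ρ)_{11} = ρ_{11}. -/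

import Mathlib

/-!
`L_0 = γ D` with `D` the Lindblad dissipator of the jump operator `E_{02}`. The matrix units
`E_{ij}` with `i, j ≠ 2` are annihilated by `D`, the coherences `E_{i2}`, `E_{2j}` (`i, j ≠ 2`)
are eigenvectors with eigenvalue `-1/2`, and the population transfer `E_{22} - E_{00}` is an
eigenvector with eigenvalue `-1`. Since `exp(tL) v = e^{tλ} v` for an eigenvector `v` with
eigenvalue `λ`, expanding `ρ` in this eigenbasis gives every entry of `exp(tL_0) ρ`.
-/

attribute [local instance] Matrix.linftyOpNormedAddCommGroup Matrix.linftyOpNormedSpace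

/-- The standard matrix unit `E_{ij}` (a `1` in row `i`, column `j`). -/
noncomputable def matUnit (i j : Fin 3) : Matrix (Fin 3) (Fin 3) ℂ :=
  Matrix.single i j 1

instance matCLMIsTopologicalRing :
    IsTopologicalRing (Matrix (Fin 3) (Fin 3) ℂ →L[ℂ] Matrix (Fin 3) (Fin 3) ℂ) := by
  exact @NonUnitalSeminormedRing.toIsTopologicalRing _
    ContinuousLinearMap.toNormedRing.toNonUnitalNormedRing.toNonUnitalSeminormedRing

theorem exp_apply_of_apply_eq_smul {𝕂 M : Type*} [RCLike 𝕂] [NormedAddCommGroup M]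
    [NormedSpace 𝕂 M] [CompleteSpace M] {A : M →L[𝕂] M} {c : 𝕂} {v : M} (h : A v = c • v) :
    NormedSpace.exp A v = NormedSpace.exp c • v := by
  have hpow (n : ℕ) : (A ^ n) v = c ^ n • v := by
    induction n with
    | zero => simp
    | succ n ih => rw [pow_succ', mul_apply_eq_comp, ih, map_smul, h, smul_smul, pow_succ]
  have hA :=
    (NormedSpace.exp_series_hasSum_exp' (𝕂 := 𝕂) A).mapL (ContinuousLinearMap.apply 𝕂 M v)
  have hc := (NormedSpace.exp_series_hasSum_exp' (𝕂 := 𝕂) c).smul_const v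
  refine hA.unique ?_
  simpa [hpow, smul_smul] using hc

theorem exp_smul_apply_of_apply_eq_smul {M : Type*} [NormedAddCommGroup M] [NormedSpace ℂ M]
    [CompleteSpace M] {A : M →L[ℂ] M} {c : ℂ} {v : M} (h : A v = c • v) (t : ℝ) :
    NormedSpace.exp (t • A) v = Complex.exp (t * c) • v := by
  have ht : (t • A) v = ((t : ℂ) * c) • v := by
    rw [smul_apply, h, ← smul_assoc, Complex.real_smul]
  rw [exp_apply_of_apply_eq_smul ht, Complex.exp_eq_exp_ℂ]

namespace Matrix

variable {n : Type*} [Fintype n] [DecidableEq n]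

/-- The Lindblad dissipator of the jump operator `E_{ab}`: decay from level `b` to level `a`. -/
noncomputable def dampingDissipator (a b : n) (ρ : Matrix n n ℂ) : Matrix n n ℂ :=
  single a b 1 * ρ * single b a 1 - (1 / 2 : ℂ) • (single b b 1 * ρ + ρ * single b b 1)

variable {a b i j : n}

theorem dampingDissipator_single_of_ne_of_ne (hi : i ≠ b) (hj : j ≠ b) :
    dampingDissipator a b (single i j 1) = 0 := by
  simp [dampingDissipator, hi.symm, hj]

theorem dampingDissipator_single_left (hj : j ≠ b) :
    dampingDissipator a b (single b j 1) = -(1 / 2 : ℂ) • single b j 1 := by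
  simp [dampingDissipator, hj]

theorem dampingDissipator_single_right (hi : i ≠ b) :
    dampingDissipator a b (single i b 1) = -(1 / 2 : ℂ) • single i b 1 := by
  simp [dampingDissipator, hi.symm]

theorem dampingDissipator_single_sub_single (hab : a ≠ b) :
    dampingDissipator a b (single b b 1 - single a a 1) = -(single b b 1 - single a a 1) := by
  simp [dampingDissipator, hab, hab.symm, mul_sub, sub_mul, ← single_add]
  norm_num

end Matrix

open Matrix in
theorem exp_smul_apply_of_eq_dampingDissipator (γ : ℝ)
    (L : Matrix (Fin 3) (Fin 3) ℂ →L[ℂ] Matrix (Fin 3) (Fin 3) ℂ)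
    (hL : ∀ ρ, L ρ = (γ : ℂ) • dampingDissipator 0 2 ρ) (t : ℝ) (ρ : Matrix (Fin 3) (Fin 3) ℂ) :
    NormedSpace.exp (t • L) ρ =
      !![ρ 0 0 + (1 - (Real.exp (-(γ * t)) : ℂ)) * ρ 2 2, ρ 0 1,
          (Real.exp (-(γ * t) / 2) : ℂ) * ρ 0 2;
        ρ 1 0, ρ 1 1, (Real.exp (-(γ * t) / 2) : ℂ) * ρ 1 2;
        (Real.exp (-(γ * t) / 2) : ℂ) * ρ 2 0, (Real.exp (-(γ * t) / 2) : ℂ) * ρ 2 1,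
          (Real.exp (-(γ * t)) : ℂ) * ρ 2 2] := by
  have eigen {μ : ℂ} {v} (hv : dampingDissipator 0 2 v = μ • v) :
      NormedSpace.exp (t • L) v = Complex.exp (t * (γ * μ)) • v :=
    exp_smul_apply_of_apply_eq_smul ((hL v).trans (by rw [hv, smul_smul])) t
  have fixed {v} (hv : dampingDissipator 0 2 v = 0) : NormedSpace.exp (t • L) v = v := by
    simpa using eigen (μ := 0) (by rw [hv, zero_smul])
  -- expand `ρ` in eigenvectors of the dissipator: the `E_ij` other than `E_22`, and `E_22 - E_00`
  have hρ : ρ = (ρ 0 0 + ρ 2 2) • single 0 0 1 + ρ 0 1 • single 0 1 1 +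
      ρ 1 0 • single 1 0 1 + ρ 1 1 • single 1 1 1 + ρ 2 2 • (single 2 2 1 - single 0 0 1) +
      ρ 0 2 • single 0 2 1 + ρ 2 0 • single 2 0 1 + ρ 1 2 • single 1 2 1 +
      ρ 2 1 • single 2 1 1 := by
    ext i j
    fin_cases i <;> fin_cases j <;> simp [single]
  have h02 : (0 : Fin 3) ≠ 2 := by decide
  have h12 : (1 : Fin 3) ≠ 2 := by decide
  conv_lhs => rw [hρ]
  simp only [map_add, map_smul]
  rw [fixed (dampingDissipator_single_of_ne_of_ne h02 h02),
    fixed (dampingDissipator_single_of_ne_of_ne h02 h12),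
    fixed (dampingDissipator_single_of_ne_of_ne h12 h02),
    fixed (dampingDissipator_single_of_ne_of_ne h12 h12),
    eigen (by rw [dampingDissipator_single_sub_single h02, neg_one_smul]),
    eigen (dampingDissipator_single_right h02), eigen (dampingDissipator_single_left h02),
    eigen (dampingDissipator_single_right h12), eigen (dampingDissipator_single_left h12)]
  have hexp : Complex.exp (t * (γ * -1)) = (Real.exp (-(γ * t)) : ℂ) := by
    push_cast; ring_nf
  have hexp_half : Complex.exp (t * (γ * -(1 / 2))) = (Real.exp (-(γ * t) / 2) : ℂ) := by
    push_cast; ring_nf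
  rw [hexp, hexp_half]
  ext i j
  fin_cases i <;> fin_cases j <;> simp [single] <;> ring

/-- explicit entries of `exp(t L_0) ρ` for the GKSL generator
`L_0(ρ) = γ (E_{02} ρ E_{20} - ½(E_{22} ρ + ρ E_{22}))` of the three-level model. -/
theorem stmt13 (γ : ℝ)
    (L₀ : Matrix (Fin 3) (Fin 3) ℂ →L[ℂ] Matrix (Fin 3) (Fin 3) ℂ)
    (hL₀ : ∀ ρ, L₀ ρ = (γ : ℂ) •
      (matUnit 0 2 * ρ * matUnit 2 0 -
        (1 / 2 : ℂ) • (matUnit 2 2 * ρ + ρ * matUnit 2 2))) :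
    ∀ (t : ℝ) (ρ : Matrix (Fin 3) (Fin 3) ℂ),
      (NormedSpace.exp (t • L₀)) ρ 0 0 =
          ρ 0 0 + (1 - (Real.exp (-(γ * t)) : ℂ)) * ρ 2 2 ∧
      (NormedSpace.exp (t • L₀)) ρ 2 2 = (Real.exp (-(γ * t)) : ℂ) * ρ 2 2 ∧
      (NormedSpace.exp (t • L₀)) ρ 0 2 = (Real.exp (-(γ * t) / 2) : ℂ) * ρ 0 2 ∧
      (NormedSpace.exp (t • L₀)) ρ 2 0 = (Real.exp (-(γ * t) / 2) : ℂ) * ρ 2 0 ∧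
      (NormedSpace.exp (t • L₀)) ρ 1 2 = (Real.exp (-(γ * t) / 2) : ℂ) * ρ 1 2 ∧
      (NormedSpace.exp (t • L₀)) ρ 2 1 = (Real.exp (-(γ * t) / 2) : ℂ) * ρ 2 1 ∧
      (NormedSpace.exp (t • L₀)) ρ 0 1 = ρ 0 1 ∧
      (NormedSpace.exp (t • L₀)) ρ 1 0 = ρ 1 0 ∧
      (NormedSpace.exp (t • L₀)) ρ 1 1 = ρ 1 1 := by
  intro t ρ
  rw [exp_smul_apply_of_eq_dampingDissipator γ L₀ hL₀ t ρ]
  simp
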